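/- Let c be a complex number with Re(c) > 0, let n ≥ 0 and m ≥ 1 be integers, and let μ be a Young diagram such that (as complex numbers) m = (|μ| − n) − f(μ)·c and m ≥ | |μ| − n |. Then μ has at most one column (μ_i ≤ 1 for all i) and |μ| = n + m. -/
import Mathlib

/-- The content of a Young diagram: `ct(μ) = Σ_{(i,j)∈μ} (j − i)`. -/
def ct (μ : YoungDiagram) : ℤ := ∑ c ∈ μ.cells, ((c.2 : ℤ) - (c.1 : ℤ))

/-- `f(μ) = (|μ|² − |μ|)/2 + ct(μ)`. -/
def fY (μ : YoungDiagram) : ℚ :=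
  (((μ.card : ℚ)) ^ 2 - (μ.card : ℚ)) / 2 + (ct μ : ℚ)

open Finset

lemma cells_eq_biUnion_col (μ : YoungDiagram) :
    μ.cells = (Finset.range (μ.rowLen 0)).biUnion μ.col := by
  ext c
  simp only [Finset.mem_biUnion, Finset.mem_range, YoungDiagram.mem_col_iff]
  constructor
  · intro hc
    refine ⟨c.2, ?_, hc, rfl⟩
    have h0 : (0, c.2) ∈ μ :=
      μ.up_left_mem (Nat.zero_le _) le_rfl (by simpa using hc)
    simpa [YoungDiagram.mem_iff_lt_rowLen] using h0
  · rintro ⟨j, _, hc, rfl⟩; exact hc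

lemma col_pairwiseDisjoint (μ : YoungDiagram) (s : Finset ℕ) :
    (s : Set ℕ).PairwiseDisjoint μ.col := by
  intro a _ b _ hab
  simp only [Finset.disjoint_left, YoungDiagram.mem_col_iff]
  rintro x ⟨_, rfl⟩ ⟨_, h⟩
  exact hab h

lemma sum_fst_eq (μ : YoungDiagram) :
    ∑ c ∈ μ.cells, c.1
      = ∑ j ∈ Finset.range (μ.rowLen 0), ∑ i ∈ Finset.range (μ.colLen j), i := by
  rw [cells_eq_biUnion_col, Finset.sum_biUnion (col_pairwiseDisjoint μ _)]
  refine Finset.sum_congr rfl fun j _ => ?_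
  rw [YoungDiagram.col_eq_prod, Finset.sum_product]
  simp

lemma card_eq_sum_colLen (μ : YoungDiagram) :
    μ.card = ∑ j ∈ Finset.range (μ.rowLen 0), μ.colLen j := by
  change μ.cells.card = _
  rw [cells_eq_biUnion_col, Finset.card_biUnion]
  · exact Finset.sum_congr rfl fun j _ => (μ.colLen_eq_card).symm
  · intro a ha b hb hab
    exact col_pairwiseDisjoint μ _ ha hb hab

lemma sum_sq_le_sq_sum (s : Finset ℕ) (f : ℕ → ℕ) :
    ∑ j ∈ s, f j ^ 2 ≤ (∑ j ∈ s, f j) ^ 2 := by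
  calc ∑ j ∈ s, f j ^ 2 ≤ ∑ j ∈ s, f j * (∑ i ∈ s, f i) := by
        refine Finset.sum_le_sum fun j hj => ?_
        have := Finset.single_le_sum (f := f) (fun i _ => Nat.zero_le _) hj
        calc f j ^ 2 = f j * f j := sq (f j) ▸ rfl
          _ ≤ f j * ∑ i ∈ s, f i := Nat.mul_le_mul_left _ this
    _ = (∑ j ∈ s, f j) ^ 2 := by rw [← Finset.sum_mul, sq]

lemma key_nat (μ : YoungDiagram) :
    2 * (∑ c ∈ μ.cells, c.1) + μ.card ≤ μ.card ^ 2 := by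
  rw [sum_fst_eq, card_eq_sum_colLen, Finset.mul_sum, ← Finset.sum_add_distrib]
  calc ∑ j ∈ Finset.range (μ.rowLen 0),
        (2 * ∑ i ∈ Finset.range (μ.colLen j), i + μ.colLen j)
      = ∑ j ∈ Finset.range (μ.rowLen 0), μ.colLen j ^ 2 := by
        refine Finset.sum_congr rfl fun j _ => ?_
        have h : ∀ N : ℕ, 2 * ∑ i ∈ Finset.range N, i + N = N ^ 2 := by
          intro N
          induction N with
          | zero => simp
          | succ k ih => rw [Finset.sum_range_succ]; nlinarith [ih]
        exact h _
    _ ≤ _ := sum_sq_le_sq_sum _ _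

lemma two_ct_ge (μ : YoungDiagram) :
    2 * (∑ c ∈ μ.cells, (c.2 : ℤ)) ≤ (μ.card : ℤ) ^ 2 - μ.card + 2 * ct μ := by
  have h := key_nat μ
  have h' : (2 * (∑ c ∈ μ.cells, c.1) + μ.card : ℤ) ≤ (μ.card : ℤ) ^ 2 := by
    exact_mod_cast h
  have hct : ct μ = (∑ c ∈ μ.cells, (c.2 : ℤ)) - (∑ c ∈ μ.cells, (c.1 : ℤ)) := by
    rw [ct, Finset.sum_sub_distrib]
  push_cast at h'
  rw [hct]
  linarith

lemma sum_snd_nonneg (μ : YoungDiagram) : 0 ≤ ∑ c ∈ μ.cells, (c.2 : ℤ) :=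
  Finset.sum_nonneg fun c _ => Int.ofNat_nonneg _

lemma fY_nonneg (μ : YoungDiagram) : 0 ≤ fY μ := by
  have h := two_ct_ge μ
  have h2 := sum_snd_nonneg μ
  rw [fY]
  have : (0 : ℚ) ≤ (μ.card : ℚ) ^ 2 - μ.card + 2 * (ct μ : ℚ) := by
    have : (0 : ℤ) ≤ (μ.card : ℤ) ^ 2 - μ.card + 2 * ct μ := by linarith
    exact_mod_cast this
  linarith

lemma fY_pos_of_two_le (μ : YoungDiagram) {i : ℕ} (hi : 2 ≤ μ.rowLen i) :
    0 < fY μ := by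
  have hmem : (i, 1) ∈ μ.cells := by
    rw [YoungDiagram.mem_cells, YoungDiagram.mem_iff_lt_rowLen]; omega
  have h2 : (1 : ℤ) ≤ ∑ c ∈ μ.cells, (c.2 : ℤ) := by
    have := Finset.single_le_sum (f := fun c : ℕ × ℕ => (c.2 : ℤ))
      (fun c _ => Int.ofNat_nonneg _) hmem
    simpa using this
  have h := two_ct_ge μ
  have : (0 : ℚ) < (μ.card : ℚ) ^ 2 - μ.card + 2 * (ct μ : ℚ) := by
    have : (0 : ℤ) < (μ.card : ℤ) ^ 2 - μ.card + 2 * ct μ := by linarith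
    exact_mod_cast this
  rw [fY]
  linarith

/-- Let c be a complex number with Re(c) > 0, n ≥ 0 and m ≥ 1 integers, and μ
a Young diagram with m = (|μ| − n) − f(μ)·c (as complex numbers) and
m ≥ ||μ| − n|. Then μ has at most one column (all rows have length ≤ 1) and
|μ| = n + m. -/
theorem stmt16 (c : ℂ) (hc : 0 < c.re) (n m : ℕ) (hm : 1 ≤ m)
    (μ : YoungDiagram)
    (h1 : (m : ℂ) = ((μ.card : ℂ) - (n : ℂ)) - (fY μ : ℂ) * c)
    (h2 : |(μ.card : ℤ) - (n : ℤ)| ≤ (m : ℤ)) :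
    (∀ i, μ.rowLen i ≤ 1) ∧ μ.card = n + m := by
  have hre : (m : ℝ) = ((μ.card : ℝ) - n) - (fY μ : ℝ) * c.re := by
    have := congrArg Complex.re h1
    simpa [Complex.mul_re] using this
  have hle : (μ.card : ℝ) - n ≤ m := by
    have : (μ.card : ℤ) - n ≤ m := le_trans (le_abs_self _) h2
    exact_mod_cast this
  have hf0 : fY μ = 0 := by
    by_contra h
    have hpos : 0 < (fY μ : ℝ) := by
      have := fY_nonneg μ
      have : 0 < fY μ := lt_of_le_of_ne this (Ne.symm h)
      exact_mod_cast this
    nlinarith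
  have heq : (m : ℝ) = (μ.card : ℝ) - n := by rw [hre, hf0]; simp
  have hcard : μ.card = n + m := by
    have : (m : ℤ) = (μ.card : ℤ) - n := by exact_mod_cast heq
    omega
  refine ⟨fun i => ?_, hcard⟩
  by_contra h
  have := fY_pos_of_two_le μ (i := i) (by omega)
  rw [hf0] at this
  exact lt_irrefl _ this
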